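/- arXiv:2509.11282 — 2 statements merged into one kernel-verified Lean document; each statement's English description precedes it below -/
import Mathlib

section
/- Let (A,·) be a commutative associative algebra, P a derivation of (A,·), and define [x,y] = x·P(y) − P(x)·y. If B is a symmetric bilinear form on A that is invariant, i.e. B(x·y, z) = B(x, y·z), then B is a commutative 2-cocycle on the Lie algebra (A,[-,-]), i.e. B([x,y],z) + B([y,z],x) + B([z,x],y) = 0 for all x,y,z ∈ A. -/
/-! Commutativity and invariance move a product across the form,
`B (a·b) c = B b (c·a)`, so `B ([x,y], z) = B (P y, z·x) - B (P x, y·z)`, and the cyclic sum of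
these differences telescopes to zero. -/

section WittBracket

variable {R A : Type*} [CommRing R] [AddCommGroup A] [Module R A]

def wittBracket (mul : A →ₗ[R] A →ₗ[R] A) (P : A →ₗ[R] A) (x y : A) : A :=
  mul x (P y) - mul (P x) y

variable {mul : A →ₗ[R] A →ₗ[R] A} {B : A →ₗ[R] A →ₗ[R] R}

theorem apply_mul_left_eq_apply_mul_right_of_comm_of_invariant
    (hcomm : ∀ x y : A, mul x y = mul y x) (hinv : ∀ x y z : A, B (mul x y) z = B x (mul y z))
    (a b c : A) : B (mul a b) c = B b (mul c a) := by
  rw [hcomm a b, hinv, hcomm a c]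

theorem apply_wittBracket_of_comm_of_invariant
    (hcomm : ∀ x y : A, mul x y = mul y x) (hinv : ∀ x y z : A, B (mul x y) z = B x (mul y z))
    (P : A →ₗ[R] A) (x y z : A) :
    B (wittBracket mul P x y) z = B (P y) (mul z x) - B (P x) (mul y z) := by
  rw [wittBracket, map_sub, LinearMap.sub_apply,
    apply_mul_left_eq_apply_mul_right_of_comm_of_invariant hcomm hinv, hinv]

theorem cyclic_sum_apply_wittBracket_eq_zero
    (hcomm : ∀ x y : A, mul x y = mul y x) (hinv : ∀ x y z : A, B (mul x y) z = B x (mul y z))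
    (P : A →ₗ[R] A) (x y z : A) :
    B (wittBracket mul P x y) z + B (wittBracket mul P y z) x + B (wittBracket mul P z x) y = 0 := by
  simp only [apply_wittBracket_of_comm_of_invariant hcomm hinv]
  ring

end WittBracket

theorem invariant_form_is_commutative_two_cocycle_general {K A : Type*} [Field K]
    [AddCommGroup A] [Module K A]
    (mul : A →ₗ[K] A →ₗ[K] A)
    (hcomm : ∀ x y : A, mul x y = mul y x)
    (P : A →ₗ[K] A)
    (br : A → A → A)
    (hbr : ∀ x y : A, br x y = mul x (P y) - mul (P x) y)
    (B : A →ₗ[K] A →ₗ[K] K)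
    (hinv : ∀ x y z : A, B (mul x y) z = B x (mul y z)) :
    ∀ x y z : A, B (br x y) z + B (br y z) x + B (br z x) y = 0 := by
  obtain rfl : br = wittBracket mul P := funext₂ hbr
  exact cyclic_sum_apply_wittBracket_eq_zero hcomm hinv P

/-- A symmetric invariant bilinear form on a commutative differential
algebra is a commutative 2-cocycle on the corresponding Witt type Lie algebra. -/
theorem invariant_form_is_commutative_two_cocycle {K A : Type*} [Field K] [CharZero K]
    [AddCommGroup A] [Module K A]
    (mul : A →ₗ[K] A →ₗ[K] A)
    (hcomm : ∀ x y : A, mul x y = mul y x)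
    (hassoc : ∀ x y z : A, mul (mul x y) z = mul x (mul y z))
    (P : A →ₗ[K] A)
    (hP : ∀ x y : A, P (mul x y) = mul (P x) y + mul x (P y))
    (br : A → A → A)
    (hbr : ∀ x y : A, br x y = mul x (P y) - mul (P x) y)
    (B : A →ₗ[K] A →ₗ[K] K)
    (hsymm : ∀ x y : A, B x y = B y x)
    (hinv : ∀ x y z : A, B (mul x y) z = B x (mul y z)) :
    ∀ x y z : A, B (br x y) z + B (br y z) x + B (br z x) y = 0 :=
  invariant_form_is_commutative_two_cocycle_general mul hcomm P br hbr B hinv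
end

section
/- Let (A,·,P,Q) be an admissible commutative differential algebra and define x∘y = Q(x·y) − P(x)·y and [x,y] = x·P(y) − P(x)·y. Then (A,·,∘,P,Q) is a relative PCA algebra: the identities x·Q(y) − P(x)·y − Q(x·y) = 0, x∘Q(y) − P(x)∘y − Q(x∘y) = 0, x·(y∘z) − y∘(x·z) + [x,y]·z − x·P(y)·z = 0, and (x·y)∘z − y∘(x·z) − x∘(y·z) + Q(x·y·z) = 0 all hold. -/
section AdmissibleCirc

variable {R A : Type*} [CommSemiring R] [AddCommGroup A] [Module R A]
  (mul : A →ₗ[R] A →ₗ[R] A) (P Q : A →ₗ[R] A)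

def admissibleCirc (x y : A) : A := Q (mul x y) - mul (P x) y

lemma mul_left_comm_of_comm_assoc (hcomm : ∀ x y : A, mul x y = mul y x)
    (hassoc : ∀ x y z : A, mul (mul x y) z = mul x (mul y z)) (x y z : A) :
    mul x (mul y z) = mul y (mul x z) := by
  rw [← hassoc, hcomm x y, hassoc]

variable {mul P Q}

lemma admissibleCirc_Q_right (hQ : ∀ x y : A, mul x (Q y) = mul (P x) y + Q (mul x y))
    (x y : A) :
    admissibleCirc mul P Q x (Q y)
      = admissibleCirc mul P Q (P x) y + Q (admissibleCirc mul P Q x y) := by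
  simp only [admissibleCirc, hQ, map_add, map_sub]
  abel

lemma mul_admissibleCirc_sub (hcomm : ∀ x y : A, mul x y = mul y x)
    (hassoc : ∀ x y z : A, mul (mul x y) z = mul x (mul y z))
    (hQ : ∀ x y : A, mul x (Q y) = mul (P x) y + Q (mul x y)) (x y z : A) :
    mul x (admissibleCirc mul P Q y z) - admissibleCirc mul P Q y (mul x z)
      = mul (mul (P x) y) z := by
  have hswap := mul_left_comm_of_comm_assoc mul hcomm hassoc
  simp only [admissibleCirc, map_sub, hQ]
  rw [hswap x (P y) z, hswap y x z, hassoc]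
  abel

lemma admissibleCirc_mul_left (hcomm : ∀ x y : A, mul x y = mul y x)
    (hassoc : ∀ x y z : A, mul (mul x y) z = mul x (mul y z))
    (hP : ∀ x y : A, P (mul x y) = mul (P x) y + mul x (P y)) (x y z : A) :
    admissibleCirc mul P Q (mul x y) z
      = admissibleCirc mul P Q y (mul x z) + admissibleCirc mul P Q x (mul y z)
        - Q (mul (mul x y) z) := by
  have hswap := mul_left_comm_of_comm_assoc mul hcomm hassoc
  simp only [admissibleCirc, hP, map_add, LinearMap.add_apply]
  rw [hassoc x y z, hswap y x z, hassoc (P x) y z, hassoc x (P y) z, hswap x (P y) z]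
  abel

end AdmissibleCirc

theorem admissible_gives_relative_PCA_general {K A : Type*} [Field K]
    [AddCommGroup A] [Module K A]
    (mul : A →ₗ[K] A →ₗ[K] A)
    (hcomm : ∀ x y : A, mul x y = mul y x)
    (hassoc : ∀ x y z : A, mul (mul x y) z = mul x (mul y z))
    (P Q : A →ₗ[K] A)
    (hP : ∀ x y : A, P (mul x y) = mul (P x) y + mul x (P y))
    (hQ : ∀ x y : A, mul x (Q y) = mul (P x) y + Q (mul x y))
    (circ : A → A → A)
    (hcirc : ∀ x y : A, circ x y = Q (mul x y) - mul (P x) y)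
    (br : A → A → A)
    (hbr : ∀ x y : A, br x y = mul x (P y) - mul (P x) y) :
    (∀ x y : A, mul x (Q y) - mul (P x) y - Q (mul x y) = 0) ∧
    (∀ x y : A, circ x (Q y) - circ (P x) y - Q (circ x y) = 0) ∧
    (∀ x y z : A,
      mul x (circ y z) - circ y (mul x z) + mul (br x y) z
        - mul (mul x (P y)) z = 0) ∧
    (∀ x y z : A,
      circ (mul x y) z - circ y (mul x z) - circ x (mul y z)
        + Q (mul (mul x y) z) = 0) := by
  obtain rfl : circ = admissibleCirc mul P Q := funext₂ hcirc
  refine ⟨fun x y => ?_, fun x y => ?_, fun x y z => ?_, fun x y z => ?_⟩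
  · rw [hQ]; abel
  · rw [admissibleCirc_Q_right hQ]; abel
  · rw [mul_admissibleCirc_sub hcomm hassoc hQ, hbr]
    simp only [map_sub, LinearMap.sub_apply]
    abel
  · rw [admissibleCirc_mul_left hcomm hassoc hP]; abel

/-- An admissible commutative differential algebra (A,·,P,Q) with
x∘y = Q(x·y) − P(x)·y and [x,y] = x·P(y) − P(x)·y is a relative PCA algebra. -/
theorem admissible_gives_relative_PCA {K A : Type*} [Field K] [CharZero K]
    [AddCommGroup A] [Module K A]
    (mul : A →ₗ[K] A →ₗ[K] A)
    (hcomm : ∀ x y : A, mul x y = mul y x)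
    (hassoc : ∀ x y z : A, mul (mul x y) z = mul x (mul y z))
    (P Q : A →ₗ[K] A)
    (hP : ∀ x y : A, P (mul x y) = mul (P x) y + mul x (P y))
    (hQ : ∀ x y : A, mul x (Q y) = mul (P x) y + Q (mul x y))
    (circ : A → A → A)
    (hcirc : ∀ x y : A, circ x y = Q (mul x y) - mul (P x) y)
    (br : A → A → A)
    (hbr : ∀ x y : A, br x y = mul x (P y) - mul (P x) y) :
    (∀ x y : A, mul x (Q y) - mul (P x) y - Q (mul x y) = 0) ∧
    (∀ x y : A, circ x (Q y) - circ (P x) y - Q (circ x y) = 0) ∧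
    (∀ x y z : A,
      mul x (circ y z) - circ y (mul x z) + mul (br x y) z
        - mul (mul x (P y)) z = 0) ∧
    (∀ x y z : A,
      circ (mul x y) z - circ y (mul x z) - circ x (mul y z)
        + Q (mul (mul x y) z) = 0) :=
  admissible_gives_relative_PCA_general mul hcomm hassoc P Q hP hQ circ hcirc br hbr
end
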